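/- For any two density matrices ρ and σ on ℂ^d, the square of their fidelity plus the square of their trace distance is at most 1; that is, F(ρ,σ)² + TD(ρ,σ)² ≤ 1. -/

import Mathlib

/-! Let `X = √ρ` and, by polar decomposition of `√σ √ρ`, pick a unitary `U` with
`Tr (U √σ √ρ) = Tr √(√ρ σ √ρ) = t`, so that `F = t²`. For `V = √σ U⁻¹` we have `X Xᴴ = ρ`,
`V Vᴴ = σ` and `‖X ∓ V‖₂² = 2 ∓ 2t`, while `2 (ρ - σ) = (X - V)(X + V)ᴴ + (X + V)(X - V)ᴴ`.
Testing `ρ - σ` against a unitary attaining its trace norm and applying Cauchy–Schwarz for the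
Hilbert–Schmidt inner product gives `‖ρ - σ‖₁² ≤ (2 - 2t)(2 + 2t)`, i.e. `TD² ≤ 1 - F`.
Hence `F ≤ 1`, and `F² + TD² ≤ F + TD² ≤ 1`. -/

open Matrix ComplexOrder

/-- The square root of a positive semidefinite matrix (the definition of `Matrix.PosSemidef.sqrt`
in the older Mathlib, which has since been removed). -/
noncomputable def Matrix.PosSemidef.sqrt {n : Type*} [Fintype n] [DecidableEq n] {𝕜 : Type*}
    [RCLike 𝕜] {A : Matrix n n 𝕜} (hA : A.PosSemidef) : Matrix n n 𝕜 :=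
  hA.1.eigenvectorUnitary.1 * diagonal ((↑) ∘ Real.sqrt ∘ hA.1.eigenvalues) *
    (star hA.1.eigenvectorUnitary : Matrix n n 𝕜)

theorem Matrix.PosSemidef.posSemidef_sqrt {n : Type*} [Fintype n] [DecidableEq n] {𝕜 : Type*}
    [RCLike 𝕜] {A : Matrix n n 𝕜} (hA : A.PosSemidef) : hA.sqrt.PosSemidef := by
  unfold Matrix.PosSemidef.sqrt
  have h : (diagonal ((↑) ∘ Real.sqrt ∘ hA.1.eigenvalues) : Matrix n n 𝕜).PosSemidef :=
    PosSemidef.diagonal (fun i => by simp [Function.comp, Real.sqrt_nonneg])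
  have := h.mul_mul_conjTranspose_same (hA.1.eigenvectorUnitary : Matrix n n 𝕜)
  simpa [Matrix.star_eq_conjTranspose] using this

/-- The trace norm of a matrix: `‖X‖₁ = Tr √(Xᴴ X)`. -/
noncomputable def traceNorm {d : ℕ} (X : Matrix (Fin d) (Fin d) ℂ) : ℝ :=
  ((Matrix.posSemidef_conjTranspose_mul_self X).sqrt.trace).re

/-- The trace distance between two matrices: `TD(ρ,σ) = ‖ρ − σ‖₁ / 2`. -/
noncomputable def traceDist {d : ℕ} (ρ σ : Matrix (Fin d) (Fin d) ℂ) : ℝ :=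
  traceNorm (ρ - σ) / 2

/-- A density matrix: positive semidefinite with trace 1. -/
def IsDensityMatrix {d : ℕ} (ρ : Matrix (Fin d) (Fin d) ℂ) : Prop :=
  ρ.PosSemidef ∧ ρ.trace = 1

/-- The fidelity `F(ρ,σ) = (Tr √(√ρ σ √ρ))²`. -/
noncomputable def fidelity {d : ℕ} {ρ σ : Matrix (Fin d) (Fin d) ℂ}
    (hρ : ρ.PosSemidef) (hσ : σ.PosSemidef) : ℝ :=
  (((show (hρ.sqrt * σ * hρ.sqrt).PosSemidef by
      simpa only [hρ.posSemidef_sqrt.isHermitian.eq] using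
        hσ.mul_mul_conjTranspose_same hρ.sqrt).sqrt.trace).re) ^ 2

open scoped InnerProductSpace

theorem exists_orthonormalBasis_inner_eq_norm {𝕜 E ι : Type*} [RCLike 𝕜] [NormedAddCommGroup E]
    [InnerProductSpace 𝕜 E] [FiniteDimensional 𝕜 E] [Fintype ι]
    (card : Module.finrank 𝕜 E = Fintype.card ι) {w : ι → E}
    (hw : Pairwise fun i j => ⟪w i, w j⟫_𝕜 = 0) :
    ∃ b : OrthonormalBasis ι 𝕜 E, ∀ j, ⟪b j, w j⟫_𝕜 = ‖w j‖ := by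
  have hv : Orthonormal 𝕜 ({j | w j ≠ 0}.domRestrict fun j => (‖w j‖⁻¹ : 𝕜) • w j) := by
    refine ⟨fun j => norm_smul_inv_norm j.2, fun i j hij => ?_⟩
    simp only [Set.domRestrict_apply, inner_smul_left, inner_smul_right,
      hw (Subtype.coe_ne_coe.mpr hij), mul_zero]
  obtain ⟨b, hb⟩ := hv.exists_orthonormalBasis_extension_of_card_eq card
  refine ⟨b, fun j => ?_⟩
  by_cases hj : w j = 0
  · simp [hj]
  · have : (‖w j‖ : 𝕜) ≠ 0 := by simpa using hj
    rw [hb j hj, inner_smul_left, inner_self_eq_norm_sq_to_K]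
    simp only [map_inv₀, RCLike.conj_ofReal]
    field_simp

namespace Matrix

variable {n 𝕜 : Type*} [Fintype n] [RCLike 𝕜]

theorem re_trace_conjTranspose_mul_sq_le (A B : Matrix n n 𝕜) :
    RCLike.re (Aᴴ * B).trace ^ 2 ≤ RCLike.re (Aᴴ * A).trace * RCLike.re (Bᴴ * B).trace := by
  classical
  -- the Hilbert–Schmidt inner product `⟪x, y⟫ = Tr (y * 1 * xᴴ)`
  let _ := toMatrixSeminormedAddCommGroup (1 : Matrix n n 𝕜) PosSemidef.one
  let _ := toMatrixInnerProductSpace (1 : Matrix n n 𝕜) PosSemidef.one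
  have h := inner_mul_inner_self_le (𝕜 := 𝕜) Bᴴ Aᴴ
  change ‖(Aᴴ * 1 * Bᴴᴴ).trace‖ * ‖(Bᴴ * 1 * Aᴴᴴ).trace‖ ≤
    RCLike.re (Bᴴ * 1 * Bᴴᴴ).trace * RCLike.re (Aᴴ * 1 * Aᴴᴴ).trace at h
  have hBA : (Bᴴ * A).trace = star (Aᴴ * B).trace := by
    rw [← trace_conjTranspose, conjTranspose_mul, conjTranspose_conjTranspose]
  simp only [conjTranspose_conjTranspose, mul_one, hBA, RCLike.star_def, RCLike.norm_conj] at h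
  nlinarith [RCLike.abs_re_le_norm (Aᴴ * B).trace, abs_nonneg (RCLike.re (Aᴴ * B).trace),
    sq_abs (RCLike.re (Aᴴ * B).trace)]

theorem re_trace_conjTranspose_mul_self_sub (X V : Matrix n n 𝕜) :
    RCLike.re ((X - V)ᴴ * (X - V)).trace =
      RCLike.re (Xᴴ * X).trace + RCLike.re (Vᴴ * V).trace - 2 * RCLike.re (Vᴴ * X).trace := by
  have h : (Xᴴ * V).trace = star (Vᴴ * X).trace := by
    rw [← trace_conjTranspose, conjTranspose_mul, conjTranspose_conjTranspose]
  simp only [conjTranspose_sub, sub_mul, mul_sub, trace_sub, map_sub, h, RCLike.star_def,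
    RCLike.conj_re]
  ring

theorem re_trace_conjTranspose_mul_self_add (X V : Matrix n n 𝕜) :
    RCLike.re ((X + V)ᴴ * (X + V)).trace =
      RCLike.re (Xᴴ * X).trace + RCLike.re (Vᴴ * V).trace + 2 * RCLike.re (Vᴴ * X).trace := by
  simpa [sub_eq_add_neg] using re_trace_conjTranspose_mul_self_sub X (-V)

variable [DecidableEq n]

theorem exists_unitary_trace_star_mul_eq_sum_sqrt (M : Matrix n n 𝕜)
    (hM : Pairwise fun i j => (Mᴴ * M) i j = 0) :
    ∃ V ∈ unitaryGroup n 𝕜, (star V * M).trace = ∑ j, (√(RCLike.re ((Mᴴ * M) j j)) : 𝕜) := by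
  let w : n → EuclideanSpace 𝕜 n := fun j => WithLp.toLp 2 (Mᵀ j)
  have hw : ∀ i j, ⟪w i, w j⟫_𝕜 = (Mᴴ * M) i j := by
    intro i j
    simp [w, mul_apply, EuclideanSpace.inner_toLp_toLp, dotProduct, mul_comm]
  obtain ⟨b, hb⟩ := exists_orthonormalBasis_inner_eq_norm (by simp) (w := w)
    fun i j hij => (hw i j).trans (hM hij)
  refine ⟨_, (EuclideanSpace.basisFun n 𝕜).toMatrix_orthonormalBasis_mem_unitary b, ?_⟩
  refine Finset.sum_congr rfl fun j _ => ?_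
  rw [diag_apply, ← hw, ← norm_eq_sqrt_re_inner, ← hb j]
  simp [w, mul_apply, EuclideanSpace.inner_eq_star_dotProduct, dotProduct,
    Module.Basis.toMatrix_apply, mul_comm]

theorem PosSemidef.trace_sqrt {A : Matrix n n 𝕜} (hA : A.PosSemidef) :
    hA.sqrt.trace = ∑ i, (√(hA.1.eigenvalues i) : 𝕜) := by
  rw [PosSemidef.sqrt, trace_mul_cycle, Unitary.coe_star_mul_self, one_mul, trace_diagonal]
  rfl

theorem PosSemidef.sqrt_mul_self {A : Matrix n n 𝕜} (hA : A.PosSemidef) :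
    hA.sqrt * hA.sqrt = A := by
  set C : Matrix n n 𝕜 := (hA.1.eigenvectorUnitary : Matrix n n 𝕜)
  conv_rhs => rw [hA.1.spectral_theorem, Unitary.conjStarAlgAut_apply]
  rw [PosSemidef.sqrt, show ∀ D E : Matrix n n 𝕜, C * D * star C * (C * E * star C) =
      C * (D * (star C * C) * E) * star C by intros; simp only [mul_assoc],
    Unitary.coe_star_mul_self, mul_one, diagonal_mul_diagonal]
  congr 3 with i
  simp [← RCLike.ofReal_mul, Real.mul_self_sqrt (hA.eigenvalues_nonneg i)]

theorem exists_unitary_trace_mul_eq_trace_sqrt (B : Matrix n n 𝕜) :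
    ∃ U ∈ unitaryGroup n 𝕜, (U * B).trace = (posSemidef_conjTranspose_mul_self B).sqrt.trace := by
  set hA := posSemidef_conjTranspose_mul_self B
  set C : Matrix n n 𝕜 := (hA.1.eigenvectorUnitary : Matrix n n 𝕜)
  have hdiag : (B * C)ᴴ * (B * C) = diagonal (RCLike.ofReal ∘ hA.1.eigenvalues) := by
    rw [← hA.1.conjStarAlgAut_star_eigenvectorUnitary, Unitary.conjStarAlgAut_star_apply]
    simp only [conjTranspose_mul, star_eq_conjTranspose, mul_assoc, C]
  obtain ⟨V, hV, htr⟩ := (B * C).exists_unitary_trace_star_mul_eq_sum_sqrt fun i j hij => by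
    beta_reduce
    rw [hdiag, diagonal_apply_ne _ hij]
  refine ⟨C * star V, mul_mem hA.1.eigenvectorUnitary.2 (Unitary.star_mem hV), ?_⟩
  rw [hA.trace_sqrt, mul_assoc, trace_mul_comm, mul_assoc, htr, hdiag]
  simp

end Matrix

theorem exists_unitary_traceNorm_eq_re_trace_mul {d : ℕ} (A : Matrix (Fin d) (Fin d) ℂ) :
    ∃ W ∈ unitaryGroup (Fin d) ℂ, traceNorm A = (W * A).trace.re := by
  obtain ⟨W, hW, htr⟩ := A.exists_unitary_trace_mul_eq_trace_sqrt
  exact ⟨W, hW, by rw [traceNorm, htr]⟩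

theorem traceNorm_mul_conjTranspose_sub_sq_le {d : ℕ} (X V : Matrix (Fin d) (Fin d) ℂ) :
    traceNorm (X * Xᴴ - V * Vᴴ) ^ 2 ≤
      ((X - V)ᴴ * (X - V)).trace.re * ((X + V)ᴴ * (X + V)).trace.re := by
  obtain ⟨W, hW, hnorm⟩ := exists_unitary_traceNorm_eq_re_trace_mul (X * Xᴴ - V * Vᴴ)
  have hunitary (A : Matrix (Fin d) (Fin d) ℂ) : (W * A)ᴴ * (W * A) = Aᴴ * A := by
    rw [conjTranspose_mul, ← star_eq_conjTranspose W, mul_assoc, ← mul_assoc (star W),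
      mem_unitaryGroup_iff'.mp hW, one_mul]
  have hsplit : (X - V) * (X + V)ᴴ + (X + V) * (X - V)ᴴ =
      (X * Xᴴ - V * Vᴴ) + (X * Xᴴ - V * Vᴴ) := by
    simp only [conjTranspose_add, conjTranspose_sub]
    noncomm_ring
  have htwo : 2 * traceNorm (X * Xᴴ - V * Vᴴ) =
      ((X + V)ᴴ * (W * (X - V))).trace.re + ((X - V)ᴴ * (W * (X + V))).trace.re := by
    rw [hnorm, two_mul, ← Complex.add_re, ← trace_add, ← mul_add, ← hsplit, mul_add, trace_add,
      ← mul_assoc, ← mul_assoc, trace_mul_comm (W * (X - V)), trace_mul_comm (W * (X + V)),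
      Complex.add_re]
  have h₁ := re_trace_conjTranspose_mul_sq_le (X + V) (W * (X - V))
  have h₂ := re_trace_conjTranspose_mul_sq_le (X - V) (W * (X + V))
  simp only [hunitary, RCLike.re_to_complex] at h₁ h₂
  -- `(a + b)² ≤ 2 (a² + b²)`
  have h₃ := sq_nonneg (((X + V)ᴴ * (W * (X - V))).trace.re - ((X - V)ᴴ * (W * (X + V))).trace.re)
  have h₄ := congrArg (· ^ 2) htwo
  nlinarith

theorem fidelity_eq_sq_re_trace_sqrt {d : ℕ} {ρ σ : Matrix (Fin d) (Fin d) ℂ}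
    (hρ : ρ.PosSemidef) (hσ : σ.PosSemidef) :
    fidelity hρ hσ =
      (posSemidef_conjTranspose_mul_self (hσ.sqrt * hρ.sqrt)).sqrt.trace.re ^ 2 := by
  have h : (hσ.sqrt * hρ.sqrt)ᴴ * (hσ.sqrt * hρ.sqrt) = hρ.sqrt * σ * hρ.sqrt := by
    rw [conjTranspose_mul, hρ.posSemidef_sqrt.isHermitian.eq, hσ.posSemidef_sqrt.isHermitian.eq,
      mul_assoc, ← mul_assoc hσ.sqrt, hσ.sqrt_mul_self, mul_assoc]
  have hsqrt : ∀ {A B : Matrix (Fin d) (Fin d) ℂ} (hA : A.PosSemidef) (hB : B.PosSemidef),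
      A = B → hA.sqrt = hB.sqrt := by
    rintro _ _ _ _ rfl
    rfl
  -- The positivity proof is the one built inside `fidelity`; with another proof term the kernel's
  -- check of the final `rfl` unfolds `sqrt` and times out.
  rw [hsqrt _ (by simpa only [hρ.posSemidef_sqrt.isHermitian.eq] using
        hσ.mul_mul_conjTranspose_same hρ.sqrt) h]
  rfl

theorem traceDist_sq_le_one_sub_fidelity {d : ℕ} {ρ σ : Matrix (Fin d) (Fin d) ℂ}
    (hρ : IsDensityMatrix ρ) (hσ : IsDensityMatrix σ) :
    traceDist ρ σ ^ 2 ≤ 1 - fidelity hρ.1 hσ.1 := by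
  set X := hρ.1.sqrt
  set Y := hσ.1.sqrt
  have hX : Xᴴ = X := hρ.1.posSemidef_sqrt.isHermitian
  have hY : Yᴴ = Y := hσ.1.posSemidef_sqrt.isHermitian
  obtain ⟨U, hU, htr⟩ := (Y * X).exists_unitary_trace_mul_eq_trace_sqrt
  set V := Y * star U
  have hVct : Vᴴ = U * Y := by rw [conjTranspose_mul, hY, ← star_eq_conjTranspose, star_star]
  have hXX : X * Xᴴ = ρ := by rw [hX, hρ.1.sqrt_mul_self]
  have hVV : V * Vᴴ = σ := by
    rw [hVct, mul_assoc, ← mul_assoc (star U), mem_unitaryGroup_iff'.mp hU, one_mul,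
      hσ.1.sqrt_mul_self]
  have hX1 : (Xᴴ * X).trace.re = 1 := by rw [hX, hρ.1.sqrt_mul_self, hρ.2, Complex.one_re]
  have hV1 : (Vᴴ * V).trace.re = 1 := by rw [trace_mul_comm, hVV, hσ.2, Complex.one_re]
  have hVX : (Vᴴ * X).trace = (U * (Y * X)).trace := by rw [hVct, mul_assoc]
  have h := traceNorm_mul_conjTranspose_sub_sq_le X V
  simp only [← RCLike.re_to_complex, re_trace_conjTranspose_mul_self_sub,
    re_trace_conjTranspose_mul_self_add] at h
  simp only [RCLike.re_to_complex, hXX, hVV, hX1, hV1, hVX, htr] at h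
  rw [fidelity_eq_sq_re_trace_sqrt, traceDist]
  nlinarith

/-- For any two density matrices, `F(ρ,σ)² + TD(ρ,σ)² ≤ 1`. -/
theorem fidelity_sq_add_traceDist_sq_le_one {d : ℕ} {ρ σ : Matrix (Fin d) (Fin d) ℂ}
    (hρ : IsDensityMatrix ρ) (hσ : IsDensityMatrix σ) :
    (fidelity hρ.1 hσ.1) ^ 2 + (traceDist ρ σ) ^ 2 ≤ 1 := by
  have hF : 0 ≤ fidelity hρ.1 hσ.1 := sq_nonneg _
  nlinarith [traceDist_sq_le_one_sub_fidelity hρ hσ, sq_nonneg (traceDist ρ σ)]
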